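/- For a fixed negative integer k = −m with m > 0, the function D_k(r) = ((r−1)/2)! / ((r−1)/2 + m)! on odd primes r is a Fermat function with residue 1/((−1/2+1)(−1/2+2)···(−1/2+m)). -/
import Mathlib


/-- Congruence of rationals mod `r`. -/
def RatCong (r : ℕ) (x y : ℚ) : Prop :=
  Nat.Coprime x.den r ∧ Nat.Coprime y.den r ∧
    (r : ℤ) ∣ (x.num * (y.den : ℤ) - y.num * (x.den : ℤ))

/-- For `k = -m` with `m > 0`, `D_k(r) = 1/∏_{j=1}^{m} ((r-1)/2 + j)`
is congruent mod the odd prime `r > 2m` to `1/∏_{j=1}^{m} (-1/2 + j)`. -/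
theorem fermat_Dk_neg (m : ℕ) (hm : 0 < m) (r : ℕ) (hr : r.Prime)
    (hodd : Odd r) (hbig : 2 * m < r) :
    RatCong r (1 / ∏ j ∈ Finset.range m, (((r : ℚ) - 1) / 2 + ((j : ℚ) + 1)))
      (1 / ∏ j ∈ Finset.range m, (-1 / 2 + ((j : ℚ) + 1))) := by
  obtain ⟨t, ht⟩ := hodd
  set A : ℕ := ∏ j ∈ Finset.range m, (t + j + 1) with hA
  set B : ℕ := ∏ j ∈ Finset.range m, (2 * j + 1) with hB
  have hrt : (r : ℚ) = 2 * t + 1 := by exact_mod_cast congrArg (Nat.cast : ℕ → ℚ) ht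
  have hx : (∏ j ∈ Finset.range m, (((r : ℚ) - 1) / 2 + ((j : ℚ) + 1))) = (A : ℚ) := by
    rw [hA]
    push_cast
    refine Finset.prod_congr rfl fun j _ => ?_
    rw [hrt]; ring
  have hy : (∏ j ∈ Finset.range m, (-1 / 2 + ((j : ℚ) + 1))) = (B : ℚ) / 2 ^ m := by
    rw [hB]
    push_cast
    rw [show ((2:ℚ)^m) = ∏ _j ∈ Finset.range m, (2:ℚ) by
      simp [Finset.prod_const]]
    rw [← Finset.prod_div_distrib]
    refine Finset.prod_congr rfl fun j _ => ?_
    ring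
  have hApos : 0 < A := Finset.prod_pos fun j _ => by omega
  have hBodd : ¬ 2 ∣ B := by
    rw [hB]
    intro h
    obtain ⟨j, _, hj⟩ := (Nat.Prime.prime Nat.prime_two).dvd_finset_prod_iff _ |>.mp h
    omega
  have hBpos : 0 < B := Finset.prod_pos fun j _ => by omega
  have hxnum : (1 / (A : ℚ)).num = 1 := by
    rw [one_div]; exact Rat.inv_natCast_num_of_pos hApos
  have hxden : (1 / (A : ℚ)).den = A := by
    rw [one_div]; exact Rat.inv_natCast_den_of_pos hApos
  have hcop : Nat.Coprime ((2 : ℤ) ^ m).natAbs (B : ℤ).natAbs := by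
    simp only [Int.natAbs_pow, Int.natAbs_natCast]
    exact Nat.Coprime.pow_left m ((Nat.prime_two.coprime_iff_not_dvd).mpr hBodd)
  have hyval : (1 / ((B : ℚ) / 2 ^ m)) = (Int.cast ((2:ℤ)^m) : ℚ) / (Int.cast (B:ℤ) : ℚ) := by
    rw [one_div_div]
    push_cast
    ring
  have hynum : (1 / ((B : ℚ) / 2 ^ m)).num = 2 ^ m := by
    rw [hyval, Rat.num_div_eq_of_coprime (by exact_mod_cast hBpos) hcop]
  have hyden : (1 / ((B : ℚ) / 2 ^ m)).den = B := by
    rw [hyval]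
    have := Rat.den_div_eq_of_coprime (a := (2:ℤ)^m) (b := (B:ℤ))
      (by exact_mod_cast hBpos) hcop
    exact_mod_cast this
  rw [RatCong, hx, hy, hxnum, hxden, hynum, hyden]
  refine ⟨?_, ?_, ?_⟩
  · refine (Nat.Coprime.symm ?_)
    rw [Nat.Prime.coprime_iff_not_dvd hr]
    intro h
    obtain ⟨j, hj, hdvd⟩ := (Nat.Prime.prime hr).dvd_finset_prod_iff _ |>.mp h
    have := Nat.le_of_dvd (by omega) hdvd
    simp only [Finset.mem_range] at hj
    omega
  · refine (Nat.Coprime.symm ?_)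
    rw [Nat.Prime.coprime_iff_not_dvd hr]
    intro h
    obtain ⟨j, hj, hdvd⟩ := (Nat.Prime.prime hr).dvd_finset_prod_iff _ |>.mp h
    have := Nat.le_of_dvd (by omega) hdvd
    simp only [Finset.mem_range] at hj
    omega
  · have : ((1 * (B : ℤ) - 2 ^ m * (A : ℤ) : ℤ) : ZMod r) = 0 := by
      push_cast [hA, hB]
      have h2 : (2:ZMod r) ^ m * ∏ j ∈ Finset.range m, ((t : ZMod r) + j + 1)
          = ∏ j ∈ Finset.range m, (2 * ((t : ZMod r) + j + 1)) := by
        rw [Finset.prod_mul_distrib, Finset.prod_const, Finset.card_range]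
      rw [h2]
      have hcong : ∀ j ∈ Finset.range m, (2 * ((t : ZMod r) + j + 1))
          = 2 * (j : ZMod r) + 1 := by
        intro j _
        have h0 : ((2 * t + 1 : ℕ) : ZMod r) = 0 := by
          rw [← ht]; exact ZMod.natCast_self r
        push_cast at h0
        linear_combination h0
      rw [Finset.prod_congr rfl hcong]
      ring
    exact (ZMod.intCast_zmod_eq_zero_iff_dvd _ _).mp this
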